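/- Let L = L₀ ⊕ L₁ be a complex Leibniz superalgebra with dim L₀ = n, dim L₁ = m ≥ 1, and nilindex equal to n + m + 1. Then m = n if n + m is even, and m = n + 1 if n + m is odd. -/

import Mathlib

/-!
If the nilindex is `dim L + 1`, the descending central series loses exactly one dimension at
each step, so `L²` has codimension one and any homogeneous `x ∉ L²` spans `L` modulo `L²`.
The Leibniz superidentity gives `L^{k+1} ⊆ [L, x] + L^{k+2}`, hence by nilpotency `L² = R_x(L)`
for the right multiplication `R_x`, and `L` is spanned by `x, R_x x, …, R_x^{N-1} x` with
`N = n + m`. An even `x` would force `L = L₀`; so `x` is odd, these vectors alternate between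
`L₁` and `L₀`, and therefore `m ≤ ⌈N/2⌉` and `n ≤ ⌊N/2⌋`.
-/

/-- A complex Leibniz superalgebra: a complex vector space `V` with an internal
direct-sum decomposition `V = L0 ⊕ L1`, a bilinear bracket respecting the
`ℤ/2`-grading and satisfying the Leibniz superidentity (for homogeneous
second and third arguments). -/
structure LeibnizSuper (V : Type) [AddCommGroup V] [Module ℂ V] where
  bracket : V →ₗ[ℂ] V →ₗ[ℂ] V
  L0 : Submodule ℂ V
  L1 : Submodule ℂ V
  compl : IsCompl L0 L1
  g00 : ∀ a ∈ L0, ∀ b ∈ L0, bracket a b ∈ L0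
  g01 : ∀ a ∈ L0, ∀ b ∈ L1, bracket a b ∈ L1
  g10 : ∀ a ∈ L1, ∀ b ∈ L0, bracket a b ∈ L1
  g11 : ∀ a ∈ L1, ∀ b ∈ L1, bracket a b ∈ L0
  super_jacobi : ∀ (x : V) (α β : Bool) (y z : V),
    y ∈ (if α then L1 else L0) → z ∈ (if β then L1 else L0) →
    bracket x (bracket y z) =
      bracket (bracket x y) z - (if α && β then (-1 : ℂ) else 1) • bracket (bracket x z) y

variable {V : Type} [AddCommGroup V] [Module ℂ V]

/-- Descending central series of a Leibniz superalgebra: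
`dcs S k` is `L^{k+1}`, i.e. `dcs S 0 = L¹ = L`. -/
def LeibnizSuper.dcs (S : LeibnizSuper V) : ℕ → Submodule ℂ V
  | 0 => ⊤
  | k + 1 => Submodule.span ℂ {v | ∃ a ∈ S.dcs k, ∃ b : V, v = S.bracket a b}

/-- Descending central series of the even part `L₀` (a Leibniz algebra):
`dcs0 S k` is `L₀^{k+1}`, i.e. `dcs0 S 0 = L₀`. -/
def LeibnizSuper.dcs0 (S : LeibnizSuper V) : ℕ → Submodule ℂ V
  | 0 => S.L0
  | k + 1 => Submodule.span ℂ {v | ∃ a ∈ S.dcs0 k, ∃ b ∈ S.L0, v = S.bracket a b}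

/-- `G` generates the superalgebra: the smallest linear subspace containing `G`
and closed under the bracket is all of `V`. -/
def LeibnizSuper.generates (S : LeibnizSuper V) (G : Set V) : Prop :=
  ∀ p : Submodule ℂ V, G ⊆ p → (∀ a ∈ p, ∀ b ∈ p, S.bracket a b ∈ p) → p = ⊤

/-- The nilindex: the minimal `s ≥ 1` with `L^s = 0`. -/
noncomputable def LeibnizSuper.nilindex (S : LeibnizSuper V) : ℕ :=
  sInf {s | 1 ≤ s ∧ S.dcs (s - 1) = ⊥}

/-- The characteristic-sequence condition `n₁ ≤ n - 2`, `m₁ ≤ m - 1`: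
for every `x ∈ L₀ \ L₀²` the right multiplication operator `R_x`
satisfies `R_x^{n-2} = 0` on `L₀` and `R_x^{m-1} = 0` on `L₁`. -/
def LeibnizSuper.charSeqLE (S : LeibnizSuper V) (n m : ℕ) : Prop :=
  ∀ x ∈ S.L0, x ∉ S.dcs0 1 →
    (∀ v ∈ S.L0, ((S.bracket.flip x : Module.End ℂ V) ^ (n - 2)) v = 0) ∧
    (∀ v ∈ S.L1, ((S.bracket.flip x : Module.End ℂ V) ^ (m - 1)) v = 0)

open Module Submodule

namespace Submodule

variable {R M : Type*} [Semiring R] [AddCommMonoid M] [Module R M]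

theorem span_image_pow_apply_sup_range_pow_eq_top {f : Module.End R M} {x : M}
    (h : span R {x} ⊔ LinearMap.range f = ⊤) (k : ℕ) :
    span R ((fun i => (f ^ i) x) '' Set.Iio k) ⊔ LinearMap.range (f ^ k) = ⊤ := by
  induction k with
  | zero => simp [Module.End.one_eq_id, LinearMap.range_id]
  | succ k ih =>
    have hrange :
        LinearMap.range (f ^ k) ≤ span R {(f ^ k) x} ⊔ LinearMap.range (f ^ (k + 1)) := by
      rw [LinearMap.range_eq_map, ← h, map_sup, map_span, Set.image_singleton, pow_succ,
        Module.End.mul_eq_comp, LinearMap.range_comp]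
    refine top_unique (ih.ge.trans (sup_le ?_ (hrange.trans (sup_le_sup_right ?_ _))))
    · exact le_sup_of_le_left (span_mono (Set.image_mono (Set.Iio_subset_Iio k.le_succ)))
    · exact span_le.2 (Set.singleton_subset_iff.2
        (subset_span (Set.mem_image_of_mem (fun i => (f ^ i) x) (Set.mem_Iio.2 k.lt_succ_self))))

theorem span_image_pow_apply_eq_top_of_pow_eq_zero {f : Module.End R M} {x : M} {N : ℕ}
    (h : span R {x} ⊔ LinearMap.range f = ⊤) (hf : f ^ N = 0) :
    span R ((fun i => (f ^ i) x) '' Set.Iio N) = ⊤ := by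
  simpa [hf] using span_image_pow_apply_sup_range_pow_eq_top h N

end Submodule

theorem finrank_le_of_span_image_Iio_eq_top {K W : Type*} [Field K] [AddCommGroup W]
    [Module K W] [FiniteDimensional K W] {p q : Submodule K W} (hpq : Disjoint p q)
    {v : ℕ → W} {N : ℕ} (hv : span K (v '' Set.Iio N) = ⊤)
    (hp : ∀ j, v (2 * j) ∈ p) (hq : ∀ j, v (2 * j + 1) ∈ q) :
    finrank K p ≤ (N + 1) / 2 ∧ finrank K q ≤ N / 2 := by
  set E := span K (Set.range fun j : Fin ((N + 1) / 2) => v (2 * j))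
  set O := span K (Set.range fun j : Fin (N / 2) => v (2 * j + 1))
  have hEO : E ⊔ O = ⊤ := by
    refine top_unique (hv.ge.trans (span_le.2 ?_))
    rintro _ ⟨i, hi, rfl⟩
    obtain ⟨j, rfl | rfl⟩ := Nat.even_or_odd' i <;> rw [Set.mem_Iio] at hi
    · exact mem_sup_left (subset_span ⟨⟨j, by omega⟩, rfl⟩)
    · exact mem_sup_right (subset_span ⟨⟨j, by omega⟩, rfl⟩)
  have hE : finrank K E ≤ finrank K p :=
    finrank_mono (span_le.2 (Set.range_subset_iff.2 fun j => hp j))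
  have hO : finrank K O ≤ finrank K q :=
    finrank_mono (span_le.2 (Set.range_subset_iff.2 fun j => hq j))
  have hEO' := finrank_add_le_finrank_add_finrank E O
  rw [hEO, finrank_top] at hEO'
  have hpq' := finrank_add_finrank_le_of_disjoint hpq
  have hEcard := finrank_range_le_card (R := K) fun j : Fin ((N + 1) / 2) => v (2 * j)
  have hOcard := finrank_range_le_card (R := K) fun j : Fin (N / 2) => v (2 * j + 1)
  simp only [Fintype.card_fin] at hEcard hOcard
  change finrank K E ≤ _ at hEcard
  change finrank K O ≤ _ at hOcard
  omega

namespace LeibnizSuper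

variable (S : LeibnizSuper V)

lemma bracket_mem_dcs_succ {k : ℕ} {a : V} (ha : a ∈ S.dcs k) (b : V) :
    S.bracket a b ∈ S.dcs (k + 1) :=
  subset_span ⟨a, ha, b, rfl⟩

lemma dcs_succ_le (k : ℕ) : S.dcs (k + 1) ≤ S.dcs k := by
  induction k with
  | zero => exact le_top
  | succ k ih => exact span_mono fun _ ⟨a, ha, b, hb⟩ => ⟨a, ih ha, b, hb⟩

lemma dcs_antitone : Antitone S.dcs := antitone_nat_of_succ_le S.dcs_succ_le

lemma dcs_add_eq_of_succ_eq {k : ℕ} (h : S.dcs (k + 1) = S.dcs k) (j : ℕ) :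
    S.dcs (k + j) = S.dcs k := by
  induction j with
  | zero => rfl
  | succ j ih =>
    calc S.dcs (k + j + 1) = S.dcs (k + 1) := by rw [dcs, dcs, ih]
      _ = S.dcs k := h

lemma dcs_succ_lt {N k : ℕ} (hN : S.dcs N = ⊥) (hk : S.dcs k ≠ ⊥) :
    S.dcs (k + 1) < S.dcs k := by
  refine (S.dcs_succ_le k).lt_of_ne fun h => hk ?_
  rw [← S.dcs_add_eq_of_succ_eq h N]
  exact le_bot_iff.1 (hN ▸ S.dcs_antitone (Nat.le_add_left N k))

lemma lt_finrank_dcs [FiniteDimensional ℂ V] {N k j : ℕ} (hN : S.dcs N = ⊥)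
    (hne : S.dcs (k + j) ≠ ⊥) : j < finrank ℂ (S.dcs k) := by
  induction j generalizing k with
  | zero => exact Nat.pos_of_ne_zero fun h => hne (Submodule.finrank_eq_zero.1 h)
  | succ j ih =>
    have hk : S.dcs k ≠ ⊥ := fun h =>
      hne (le_bot_iff.1 (h ▸ S.dcs_antitone (k.le_add_right _)))
    have hstep := Submodule.finrank_lt_finrank_of_lt (S.dcs_succ_lt hN hk)
    have := ih (k := k + 1) (by rwa [add_right_comm, add_assoc])
    omega

lemma dcs_eq_bot_of_nilindex_eq {k : ℕ} (h : S.nilindex = k + 1) : S.dcs k = ⊥ := by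
  have hmem := Nat.sInf_mem (Nat.nonempty_of_pos_sInf (show 0 < S.nilindex from h ▸ k.succ_pos))
  rw [← nilindex, h] at hmem
  simpa using hmem.2

lemma nilindex_le {k : ℕ} (h : S.dcs k = ⊥) : S.nilindex ≤ k + 1 :=
  Nat.sInf_le ⟨Nat.le_add_left 1 k, by simpa using h⟩

lemma sub_le_finrank_dcs [FiniteDimensional ℂ V] {N : ℕ} (h : S.nilindex = N + 1) (k : ℕ) :
    N - k ≤ finrank ℂ (S.dcs k) := by
  rcases le_or_gt N k with hk | hk
  · simp [Nat.sub_eq_zero_of_le hk]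
  · have hne : S.dcs (k + (N - 1 - k)) ≠ ⊥ := fun hbot => by
      have := S.nilindex_le hbot
      omega
    have := S.lt_finrank_dcs (S.dcs_eq_bot_of_nilindex_eq h) hne
    omega

lemma exists_homogeneous_not_mem {p : Submodule ℂ V} (hp : p ≠ ⊤) :
    ∃ x ∉ p, x ∈ S.L0 ∨ x ∈ S.L1 := by
  by_contra! h
  refine hp (top_unique (S.compl.sup_eq_top.ge.trans (sup_le ?_ ?_)))
  · exact fun x hx => not_not.1 fun hxp => (h x hxp).1 hx
  · exact fun x hx => not_not.1 fun hxp => (h x hxp).2 hx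

lemma exists_homogeneous_generator [FiniteDimensional ℂ V]
    (h : S.nilindex = finrank ℂ V + 1) (hV : 0 < finrank ℂ V) :
    ∃ x, (x ∈ S.L0 ∨ x ∈ S.L1) ∧ span ℂ {x} ⊔ S.dcs 1 = ⊤ := by
  have : Nontrivial V := Module.nontrivial_of_finrank_pos hV
  have hlt : S.dcs 1 < ⊤ := S.dcs_succ_lt (S.dcs_eq_bot_of_nilindex_eq h) top_ne_bot
  obtain ⟨x, hx, hhom⟩ := S.exists_homogeneous_not_mem hlt.ne
  refine ⟨x, hhom, eq_top_of_finrank_eq (le_antisymm (finrank_le _) ?_)⟩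
  have hsup := finrank_lt_finrank_of_lt
    (right_lt_sup.2 ((span_singleton_le_iff_mem x _).not.2 hx) : S.dcs 1 < span ℂ {x} ⊔ S.dcs 1)
  have := S.sub_le_finrank_dcs h 1
  omega

lemma bracket_bracket_mem_dcs {k : ℕ} {a : V} (ha : a ∈ S.dcs k) (y z : V) :
    S.bracket a (S.bracket y z) ∈ S.dcs (k + 2) := by
  have homog : ∀ (α β : Bool) (y z : V), y ∈ (if α then S.L1 else S.L0) →
      z ∈ (if β then S.L1 else S.L0) → S.bracket a (S.bracket y z) ∈ S.dcs (k + 2) := by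
    intro α β y z hy hz
    rw [S.super_jacobi a α β y z hy hz]
    exact sub_mem (S.bracket_mem_dcs_succ (S.bracket_mem_dcs_succ ha y) z)
      (smul_mem _ _ (S.bracket_mem_dcs_succ (S.bracket_mem_dcs_succ ha z) y))
  have hsplit (u : V) : u ∈ S.L0 ⊔ S.L1 := S.compl.sup_eq_top ▸ mem_top
  obtain ⟨y0, hy0, y1, hy1, rfl⟩ := mem_sup.1 (hsplit y)
  obtain ⟨z0, hz0, z1, hz1, rfl⟩ := mem_sup.1 (hsplit z)
  simp only [map_add, LinearMap.add_apply]
  refine add_mem (add_mem ?_ ?_) (add_mem ?_ ?_)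
  · exact homog false false _ _ (by simpa using hy0) (by simpa using hz0)
  · exact homog true false _ _ (by simpa using hy1) (by simpa using hz0)
  · exact homog false true _ _ (by simpa using hy0) (by simpa using hz1)
  · exact homog true true _ _ (by simpa using hy1) (by simpa using hz1)

lemma bracket_mem_dcs_add_two {k : ℕ} {a w : V} (ha : a ∈ S.dcs k) (hw : w ∈ S.dcs 1) :
    S.bracket a w ∈ S.dcs (k + 2) := by
  have : S.dcs 1 ≤ (S.dcs (k + 2)).comap (S.bracket a) :=
    span_le.2 fun _ ⟨y, _, z, hv⟩ => hv ▸ S.bracket_bracket_mem_dcs ha y z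
  exact this hw

lemma dcs_succ_le_range_sup {x : V} (hx : span ℂ {x} ⊔ S.dcs 1 = ⊤) (k : ℕ) :
    S.dcs (k + 1) ≤ LinearMap.range (S.bracket.flip x) ⊔ S.dcs (k + 2) := by
  refine span_le.2 ?_
  rintro _ ⟨a, ha, b, rfl⟩
  obtain ⟨u, hu, w, hw, rfl⟩ := mem_sup.1 (hx ▸ mem_top : b ∈ span ℂ {x} ⊔ S.dcs 1)
  obtain ⟨c, rfl⟩ := mem_span_singleton.1 hu
  rw [SetLike.mem_coe, map_add, map_smul]
  exact add_mem (mem_sup_left (smul_mem _ c ⟨a, rfl⟩))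
    (mem_sup_right (S.bracket_mem_dcs_add_two ha hw))

lemma dcs_one_le_range {x : V} {N : ℕ} (hx : span ℂ {x} ⊔ S.dcs 1 = ⊤)
    (hN : S.dcs N = ⊥) :
    S.dcs 1 ≤ LinearMap.range (S.bracket.flip x) := by
  have key : ∀ j, S.dcs 1 ≤ LinearMap.range (S.bracket.flip x) ⊔ S.dcs (j + 1) := by
    intro j
    induction j with
    | zero => exact le_sup_right
    | succ j ih => exact ih.trans (sup_le le_sup_left (S.dcs_succ_le_range_sup hx j))
  simpa [le_bot_iff.1 (hN ▸ S.dcs_antitone N.le_succ)] using key N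

lemma pow_flip_apply_mem_dcs (x v : V) (k : ℕ) : ((S.bracket.flip x) ^ k) v ∈ S.dcs k := by
  induction k with
  | zero => exact mem_top
  | succ k ih =>
    rw [pow_succ', Module.End.mul_apply]
    exact S.bracket_mem_dcs_succ ih x

lemma span_pow_flip_apply_eq_top {x : V} {N : ℕ} (hx : span ℂ {x} ⊔ S.dcs 1 = ⊤)
    (hN : S.dcs N = ⊥) : span ℂ ((fun i => ((S.bracket.flip x) ^ i) x) '' Set.Iio N) = ⊤ := by
  refine span_image_pow_apply_eq_top_of_pow_eq_zero ?_ ?_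
  · exact top_unique (hx.ge.trans (sup_le_sup_left (S.dcs_one_le_range hx hN) _))
  · exact LinearMap.ext fun v => by simpa [hN] using S.pow_flip_apply_mem_dcs x v N

lemma pow_flip_apply_mem_L0 {x v : V} (hx : x ∈ S.L0) (hv : v ∈ S.L0) (i : ℕ) :
    ((S.bracket.flip x) ^ i) v ∈ S.L0 := by
  induction i with
  | zero => exact hv
  | succ i ih =>
    rw [pow_succ', Module.End.mul_apply]
    exact S.g00 _ ih _ hx

lemma pow_flip_apply_mem_L1 {x v : V} (hx : x ∈ S.L1) (hv : v ∈ S.L1) (j : ℕ) :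
    ((S.bracket.flip x) ^ (2 * j)) v ∈ S.L1 ∧
      ((S.bracket.flip x) ^ (2 * j + 1)) v ∈ S.L0 := by
  induction j with
  | zero => exact ⟨hv, S.g11 _ hv _ hx⟩
  | succ j ih =>
    have heven : ((S.bracket.flip x) ^ (2 * (j + 1))) v ∈ S.L1 := by
      rw [show 2 * (j + 1) = 2 * j + 1 + 1 by ring, pow_succ', Module.End.mul_apply]
      exact S.g01 _ ih.2 _ hx
    refine ⟨heven, ?_⟩
    rw [pow_succ', Module.End.mul_apply]
    exact S.g11 _ heven _ hx

end LeibnizSuper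

/-- Remark 2.1 of the paper: if a complex Leibniz superalgebra with
`dim L₀ = n`, `dim L₁ = m ≥ 1` has maximal nilindex `n + m + 1`, then `m = n`
when `n + m` is even and `m = n + 1` when `n + m` is odd. -/
theorem leibnizSuper_maximal_nilindex_dims
    {V : Type} [AddCommGroup V] [Module ℂ V] [FiniteDimensional ℂ V]
    (S : LeibnizSuper V) (n m : ℕ) (hm : 1 ≤ m)
    (hdim0 : Module.finrank ℂ S.L0 = n) (hdim1 : Module.finrank ℂ S.L1 = m)
    (hnil : S.nilindex = n + m + 1) :
    (Even (n + m) → m = n) ∧ (¬ Even (n + m) → m = n + 1) := by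
  have hV : finrank ℂ V = n + m := by
    rw [← Submodule.finrank_add_eq_of_isCompl S.compl, hdim0, hdim1]
  rw [← hV] at hnil
  obtain ⟨x, hhom, hx⟩ := S.exists_homogeneous_generator hnil (by omega)
  have hspan := S.span_pow_flip_apply_eq_top hx (S.dcs_eq_bot_of_nilindex_eq hnil)
  rcases hhom with hx0 | hx1
  · have hL0 : S.L0 = ⊤ := top_unique <| hspan.ge.trans <|
      span_le.2 <| Set.image_subset_iff.2 fun i _ => S.pow_flip_apply_mem_L0 hx0 hx0 i
    rw [hL0, finrank_top] at hdim0
    omega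
  · have hpar := S.pow_flip_apply_mem_L1 hx1 hx1
    obtain ⟨h1, h0⟩ := finrank_le_of_span_image_Iio_eq_top S.compl.disjoint.symm hspan
      (fun j => (hpar j).1) (fun j => (hpar j).2)
    rw [Nat.even_iff]
    omega
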